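/- arXiv:1906.09970 — 3 statements merged into one kernel-verified Lean document; each statement's English description precedes it below -/
import Mathlib

section
/- For a K-user degraded Gaussian BC with channel gains satisfying h_1^2 ≤ h_2^2 ≤ ... ≤ h_K^2, if for each k the rate satisfies ρ_k = C(h_k^2 P_k / (1 + h_k^2 Σ_{j=k+1}^K P_j)) where C(x) = (1/2)log₂(1+x), then the total power satisfies Σ_{k=1}^K P_k = Σ_{k=1}^K ((2^{2ρ_k} - 1)/h_k^2) · Π_{j=1}^{k-1} 2^{2ρ_j}. -/
open Finset

/-- Capacity function `C(x) = (1/2)·log₂(1+x)`. -/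
noncomputable def gaussCap (x : ℝ) : ℝ := (1/2) * Real.logb 2 (1 + x)

/-
Writing `a_k = 2^{2ρ_k}` and `S_k = Σ_{j ≥ k} P_j` for the power still to be decoded by user `k`,
the rate equation inverts to `(a_k - 1)/h_k² + a_k S_{k+1} = S_k`. Unrolling this recurrence from
`S_0` down to `S_K = 0` produces the weights `Π_{j<k} a_j`.
-/

lemma sum_range_mul_prod_add_prod_mul_eq {R : Type*} [CommRing R] {a c S : ℕ → R} {K : ℕ}
    (hrec : ∀ k < K, c k + a k * S (k + 1) = S k) :
    ∀ n ≤ K, ∑ k ∈ range n, c k * ∏ j ∈ range k, a j + (∏ j ∈ range n, a j) * S n = S 0 := by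
  intro n hn
  induction n with
  | zero => simp
  | succ n ih =>
    rw [← ih (by omega), sum_range_succ, prod_range_succ, ← hrec n (by omega)]
    ring

lemma sum_range_mul_prod_eq_of_recurrence {R : Type*} [CommRing R] {a c S : ℕ → R} {K : ℕ}
    (hrec : ∀ k < K, c k + a k * S (k + 1) = S k) (hK : S K = 0) :
    ∑ k ∈ range K, c k * ∏ j ∈ range k, a j = S 0 := by
  simpa [hK] using sum_range_mul_prod_add_prod_mul_eq hrec K le_rfl

lemma two_rpow_two_mul_gaussCap {x : ℝ} (hx : 0 < 1 + x) : (2 : ℝ) ^ (2 * gaussCap x) = 1 + x := by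
  rw [gaussCap, ← mul_assoc, show (2 : ℝ) * (1 / 2) = 1 by norm_num, one_mul]
  exact Real.rpow_logb two_pos (by norm_num) hx

lemma gaussCap_power_recurrence {g p s : ℝ} (hg : 0 < g) (hp : 0 ≤ p) (hs : 0 ≤ s) :
    ((2 : ℝ) ^ (2 * gaussCap (g * p / (1 + g * s))) - 1) / g
      + (2 : ℝ) ^ (2 * gaussCap (g * p / (1 + g * s))) * s = p + s := by
  have hden : 0 < 1 + g * s := by positivity
  rw [two_rpow_two_mul_gaussCap (by positivity)]
  field_simp
  ring

theorem stmt0_general (K : ℕ) (h P ρ : ℕ → ℝ)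
    (hh : ∀ k, 0 < h k) (hP : ∀ k, 0 ≤ P k)
    (hρ : ∀ k < K, ρ k =
      gaussCap ((h k) ^ 2 * P k / (1 + (h k) ^ 2 * ∑ j ∈ Finset.Ico (k+1) K, P j))) :
    ∑ k ∈ Finset.range K, P k =
      ∑ k ∈ Finset.range K,
        (((2:ℝ) ^ (2 * ρ k) - 1) / (h k) ^ 2) * ∏ j ∈ Finset.range k, (2:ℝ) ^ (2 * ρ j) := by
  have hrec : ∀ k < K, ((2:ℝ) ^ (2 * ρ k) - 1) / (h k) ^ 2 + (2:ℝ) ^ (2 * ρ k) *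
      ∑ j ∈ Ico (k + 1) K, P j = ∑ j ∈ Ico k K, P j := by
    intro k hk
    rw [hρ k hk, gaussCap_power_recurrence (by positivity [hh k]) (hP k)
      (sum_nonneg fun j _ => hP j), sum_eq_sum_Ico_succ_bot hk]
  rw [sum_range_mul_prod_eq_of_recurrence (S := fun k => ∑ j ∈ Ico k K, P j) hrec
    (by rw [Ico_self, sum_empty]), range_eq_Ico]

/-- Power inversion for the degraded Gaussian BC: if the rates are the
capacities with successive interference cancellation, the total power has the
stated closed form. -/
theorem stmt0 (K : ℕ) (h P ρ : ℕ → ℝ)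
    (hh : ∀ k, 0 < h k) (hP : ∀ k, 0 ≤ P k)
    (hmono : ∀ j k, j ≤ k → (h j) ^ 2 ≤ (h k) ^ 2)
    (hρ : ∀ k < K, ρ k =
      gaussCap ((h k) ^ 2 * P k / (1 + (h k) ^ 2 * ∑ j ∈ Finset.Ico (k+1) K, P j))) :
    ∑ k ∈ Finset.range K, P k =
      ∑ k ∈ Finset.range K,
        (((2:ℝ) ^ (2 * ρ k) - 1) / (h k) ^ 2) * ∏ j ∈ Finset.range k, (2:ℝ) ^ (2 * ρ j) :=
  stmt0_general K h P ρ hh hP hρ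
end

section
/- Fix N ≥ K and k ≤ N_e = min{N,K}. The set 𝔇_d of demand vectors with distinct first N_e entries can be partitioned into |𝔇_d|/k groups of size k such that within each group, for any two distinct members d^{t1}, d^{t2}, the k-th entry of d^{t1} lies among the first k-1 entries of d^{t2} and vice versa. In particular, k divides |𝔇_d| = C(N,N_e)·N_e!·N^{K-N_e}. -/
open Finset Equiv
open scoped Classical

/-!
Let `σ` be the cycle `(0 1 … k-1)` of the coordinates (`Fin.cycleRange`); it has order `k`.
Precomposition with powers of `σ` preserves `𝔇_d`, and its orbits are the blocks. An orbit has
exactly `k` elements because a vector of `𝔇_d` is injective on its first `k` coordinates. If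
`d₂ = d₁ ∘ σ ^ m` with `0 < m < k`, then `d₂` takes the value `d₁ (k-1)` at coordinate `k-1-m`;
the other half of the crossing property follows by symmetry of the orbit relation.
-/

namespace Fin

variable {n : ℕ} (i : Fin n)

theorem coe_cycleRange_eq_mod_of_le {j : Fin n} (hj : j ≤ i) :
    (i.cycleRange j : ℕ) = (j + 1) % (i + 1) := by
  rcases hj.lt_or_eq with hj | rfl
  · rw [coe_cycleRange_of_lt hj, Nat.mod_eq_of_lt (Nat.succ_lt_succ (Fin.lt_def.mp hj))]
  · rw [coe_cycleRange_of_le le_rfl, if_pos rfl, Nat.mod_self]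

theorem coe_cycleRange_pow_of_le {j : Fin n} (hj : j ≤ i) (m : ℕ) :
    ((i.cycleRange ^ m) j : ℕ) = (j + m) % (i + 1) := by
  induction m with
  | zero => simp [Nat.mod_eq_of_lt (Nat.lt_succ_of_le hj)]
  | succ m ih =>
    have hle : (i.cycleRange ^ m) j ≤ i := by
      rw [Fin.le_def, ih]; exact Nat.le_of_lt_succ (Nat.mod_lt _ (Nat.succ_pos _))
    rw [pow_succ', Perm.mul_apply, coe_cycleRange_eq_mod_of_le i hle, ih, Nat.mod_add_mod,
      add_assoc]

theorem cycleRange_pow_of_gt {j : Fin n} (hj : i < j) (m : ℕ) : (i.cycleRange ^ m) j = j :=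
  Perm.pow_apply_eq_self_of_apply_eq_self (cycleRange_of_gt hj) m

theorem coe_cycleRange_pow_lt {e : ℕ} (hi : (i : ℕ) < e) {j : Fin n} (hj : (j : ℕ) < e) (m : ℕ) :
    ((i.cycleRange ^ m) j : ℕ) < e := by
  rcases le_or_gt j i with hji | hij
  · rw [coe_cycleRange_pow_of_le i hji]
    exact (Nat.mod_lt _ (Nat.succ_pos _)).trans_le hi
  · rwa [cycleRange_pow_of_gt i hij]

theorem orderOf_cycleRange : orderOf i.cycleRange = i + 1 := by
  rw [orderOf_eq_iff (Nat.succ_pos _)]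
  refine ⟨Perm.ext fun j => ?_, fun m hm hm0 h => ?_⟩
  · rcases le_or_gt j i with hji | hij
    · rw [Perm.one_apply, Fin.ext_iff, coe_cycleRange_pow_of_le i hji, Nat.add_mod_right,
        Nat.mod_eq_of_lt (Nat.lt_succ_of_le hji)]
    · exact cycleRange_pow_of_gt i hij _
  · have h0 := congrArg Fin.val (Perm.ext_iff.mp h ⟨0, i.pos⟩)
    rw [coe_cycleRange_pow_of_le i (Nat.zero_le _), Perm.one_apply, zero_add,
      Nat.mod_eq_of_lt hm] at h0
    exact hm0.ne' h0

end Fin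

namespace Equiv.Perm

variable {ι : Type*}

def precompSetoid (σ : Perm ι) (α : Type*) : Setoid (ι → α) where
  r d d' := ∃ m : ℤ, d' = d ∘ ⇑(σ ^ m)
  iseqv :=
    { refl d := ⟨0, by simp⟩
      symm := fun ⟨m, h⟩ => ⟨-m, by
        rw [h, Function.comp_assoc, ← Perm.coe_mul, ← zpow_add, add_neg_cancel, zpow_zero,
          Perm.coe_one, Function.comp_id]⟩
      trans := fun ⟨m, h⟩ ⟨m', h'⟩ => ⟨m + m', by
        rw [h', h, Function.comp_assoc, ← Perm.coe_mul, ← zpow_add]⟩ }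

theorem precompSetoid_iff_exists_lt_orderOf [Finite ι] {σ : Perm ι} {α : Type*} {d d' : ι → α} :
    precompSetoid σ α d d' ↔ ∃ m < orderOf σ, d' = d ∘ ⇑(σ ^ m) := by
  constructor
  · rintro ⟨m, rfl⟩
    obtain ⟨j, hj, hjm⟩ :=
      mem_image.mp (mem_zpowers_iff_mem_range_orderOf.mp (Subgroup.zpow_mem_zpowers σ m))
    exact ⟨j, mem_range.mp hj, by rw [hjm]⟩
  · rintro ⟨m, -, rfl⟩
    exact ⟨m, by rw [zpow_natCast]⟩

end Equiv.Perm

namespace Fin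

variable {α : Type*} [DecidableEq α] {n : ℕ} (i : Fin n) (s : Finset (Fin n → α))

noncomputable def cycleRangePartition : Finpartition s :=
  Finpartition.ofSetSetoid (i.cycleRange.precompSetoid α) s

variable {i s}

theorem part_cycleRangePartition (hs : ∀ d ∈ s, ∀ m : ℕ, d ∘ ⇑(i.cycleRange ^ m) ∈ s)
    {d : Fin n → α} (hd : d ∈ s) :
    (cycleRangePartition i s).part d = (range (i + 1)).image fun m => d ∘ ⇑(i.cycleRange ^ m) := by
  ext d'
  rw [cycleRangePartition, Finpartition.mem_part_ofSetSetoid_iff_rel,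
    Perm.precompSetoid_iff_exists_lt_orderOf, orderOf_cycleRange, mem_image]
  simp only [mem_range]
  constructor
  · rintro ⟨-, -, m, hm, rfl⟩
    exact ⟨m, hm, rfl⟩
  · rintro ⟨m, hm, rfl⟩
    exact ⟨hd, hs d hd m, m, hm, rfl⟩

theorem card_of_mem_cycleRangePartition (hs : ∀ d ∈ s, ∀ m : ℕ, d ∘ ⇑(i.cycleRange ^ m) ∈ s)
    (hinj : ∀ d ∈ s, Set.InjOn d (Set.Iic i)) {B : Finset (Fin n → α)}
    (hB : B ∈ (cycleRangePartition i s).parts) : B.card = i + 1 := by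
  obtain ⟨d, hdB⟩ := Finpartition.nonempty_of_mem_parts _ hB
  have hd : d ∈ s := Finpartition.le _ hB hdB
  rw [← Finpartition.part_eq_of_mem _ hB hdB, part_cycleRangePartition hs hd,
    card_image_of_injOn, card_range]
  intro m hm m' hm' h
  have h0 : (⟨0, i.pos⟩ : Fin n) ≤ i := Nat.zero_le _
  have hle (m : ℕ) : (i.cycleRange ^ m) ⟨0, i.pos⟩ ∈ Set.Iic i := by
    simp only [Set.mem_Iic, Fin.le_def, coe_cycleRange_pow_of_le i h0]
    exact Nat.le_of_lt_succ (Nat.mod_lt _ (Nat.succ_pos _))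
  have := congrArg Fin.val (hinj d hd (hle m) (hle m') (congrFun h ⟨0, i.pos⟩))
  rwa [coe_cycleRange_pow_of_le i h0, coe_cycleRange_pow_of_le i h0, zero_add, zero_add,
    Nat.mod_eq_of_lt (mem_range.mp hm), Nat.mod_eq_of_lt (mem_range.mp hm')] at this

theorem exists_lt_apply_eq_of_mem_cycleRangePartition {B : Finset (Fin n → α)}
    (hB : B ∈ (cycleRangePartition i s).parts) {d d' : Fin n → α} (hd : d ∈ B) (hd' : d' ∈ B)
    (hne : d ≠ d') : ∃ j : Fin n, (j : ℕ) < i ∧ d' j = d i := by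
  have hrel : i.cycleRange.precompSetoid α d d' := by
    rw [← Finpartition.part_eq_of_mem _ hB hd, cycleRangePartition,
      Finpartition.mem_part_ofSetSetoid_iff_rel] at hd'
    exact hd'.2.2
  obtain ⟨m, hm, rfl⟩ := Perm.precompSetoid_iff_exists_lt_orderOf.mp hrel
  rw [orderOf_cycleRange] at hm
  have hm0 : m ≠ 0 := by
    rintro rfl
    exact hne (by simp)
  refine ⟨⟨i - m, by omega⟩, by dsimp only; omega, congrArg d (Fin.ext ?_)⟩
  rw [coe_cycleRange_pow_of_le i (by simp [Fin.le_def]), Nat.sub_add_cancel (by omega),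
    Nat.mod_eq_of_lt (Nat.lt_succ_self _)]

end Fin

/-- The set `𝔇_d` of demand vectors whose first `N_e = min{N,K}` entries are
pairwise distinct can be partitioned into blocks of size `k` such that within
each block, for any two distinct members the `k`-th entry of one lies among
the first `k-1` entries of the other; in particular `k ∣ |𝔇_d|`. -/
theorem stmt11 (N K k : ℕ)
    (hk2 : 2 ≤ k) (hkNe : k ≤ min N K) :
    ∃ G : Finset (Finset (Fin K → Fin N)),
      (∀ B ∈ G, B.card = k) ∧
      (∀ B ∈ G, B ⊆ Finset.univ.filter (fun d : Fin K → Fin N =>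
        ∀ i j : Fin K, (i : ℕ) < min N K → (j : ℕ) < min N K → d i = d j → i = j)) ∧
      (∀ d ∈ Finset.univ.filter (fun d : Fin K → Fin N =>
        ∀ i j : Fin K, (i : ℕ) < min N K → (j : ℕ) < min N K → d i = d j → i = j),
        ∃! B, B ∈ G ∧ d ∈ B) ∧
      (∀ B ∈ G, ∀ d1 ∈ B, ∀ d2 ∈ B, d1 ≠ d2 →
        (∃ i : Fin K, (i : ℕ) < k - 1 ∧
          d2 i = d1 ⟨k - 1, by omega⟩) ∧
        (∃ i : Fin K, (i : ℕ) < k - 1 ∧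
          d1 i = d2 ⟨k - 1, by omega⟩)) ∧
      k ∣ (Finset.univ.filter (fun d : Fin K → Fin N =>
        ∀ i j : Fin K, (i : ℕ) < min N K → (j : ℕ) < min N K → d i = d j → i = j)).card := by
  set 𝔇 := univ.filter fun d : Fin K → Fin N =>
    ∀ i j : Fin K, (i : ℕ) < min N K → (j : ℕ) < min N K → d i = d j → i = j
  let i : Fin K := ⟨k - 1, by omega⟩
  have hi : (i : ℕ) < min N K := by simp only [i]; omega
  have hs : ∀ d ∈ 𝔇, ∀ m : ℕ, d ∘ ⇑(i.cycleRange ^ m) ∈ 𝔇 := by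
    simp only [𝔇, mem_filter, mem_univ, true_and]
    intro d hd m j j' hj hj' h
    exact (i.cycleRange ^ m).injective
      (hd _ _ (i.coe_cycleRange_pow_lt hi hj m) (i.coe_cycleRange_pow_lt hi hj' m) h)
  have hinj : ∀ d ∈ 𝔇, Set.InjOn d (Set.Iic i) := fun d hd j hj j' hj' =>
    (mem_filter.mp hd).2 j j' (lt_of_le_of_lt hj hi) (lt_of_le_of_lt hj' hi)
  set P := i.cycleRangePartition 𝔇
  have hcard : ∀ B ∈ P.parts, B.card = k := fun B hB => by
    rw [Fin.card_of_mem_cycleRangePartition hs hinj hB]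
    simp only [i]
    omega
  refine ⟨P.parts, hcard, fun B hB => P.le hB, fun d hd => P.existsUnique_mem hd,
    fun B hB d1 h1 d2 h2 hne => ⟨Fin.exists_lt_apply_eq_of_mem_cycleRangePartition hB h1 h2 hne,
      Fin.exists_lt_apply_eq_of_mem_cycleRangePartition hB h2 h1 hne.symm⟩, ?_⟩
  rw [← P.sum_card_parts]
  exact dvd_sum fun B hB => (hcard B hB).symm ▸ dvd_rfl
end

section
/- (Delivery rate in the single-demand subroutine) For leader set 𝒦 ⊆ [K] with e_k = |{k' ∈ 𝒦 : k' > k}|, the per-user rates γ̂_k given by γ̂_k = C(K-k, t)/C(K, t) for k ∈ 𝒦 and γ̂_k = (C(K-k, t) − C(K-k-e_k, t))/C(K, t) for k ∉ 𝒦 (rates normalized, single part of unit rate, integer cache parameter t) sum to Σ_{k=1}^K γ̂_k = (C(K, t+1) − C(K−|𝒦|, t+1))/C(K, t). -/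
open Finset
open scoped Classical

/-!
Each sum is a hockey-stick sum in disguise. On `[1, K]` the number of elements above `k` is
`K - k`; on the non-leaders `[1, K] \ 𝒦` it is `K - k - e_k`. Counting the elements above `k`
ranks any finite set `S` bijectively onto `{0, …, |S| - 1}`, so both sums become
`∑_{j < n} C(j, t) = C(n, t + 1)`, with `n = K` and `n = K - |𝒦|` respectively.
-/

theorem sum_range_choose_eq_choose_add_one (n t : ℕ) :
    ∑ j ∈ range n, j.choose t = n.choose (t + 1) := by
  induction n with
  | zero => simp
  | succ n ih => rw [sum_range_succ, ih, Nat.choose_succ_succ', add_comm]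

section Rank

variable {α : Type*} [LinearOrder α]

theorem card_filter_lt_lt_card {S : Finset α} {k : α} (hk : k ∈ S) :
    #{k' ∈ S | k < k'} < #S :=
  card_lt_card (filter_ssubset.2 ⟨k, hk, lt_irrefl k⟩)

theorem strictAntiOn_card_filter_lt (S : Finset α) :
    StrictAntiOn (fun k => #{k' ∈ S | k < k'}) S := fun _ _ b hb hab =>
  card_lt_card <| (ssubset_iff_of_subset (monotone_filter_right _ fun _ _ => hab.trans)).2
    ⟨b, mem_filter.2 ⟨hb, hab⟩, by simp⟩

theorem image_card_filter_lt (S : Finset α) :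
    S.image (fun k => #{k' ∈ S | k < k'}) = range #S :=
  eq_of_subset_of_card_le
    (image_subset_iff.2 fun _ hk => mem_range.2 (card_filter_lt_lt_card hk))
    (by rw [card_range, card_image_of_injOn (strictAntiOn_card_filter_lt S).injOn])

theorem sum_card_filter_lt {M : Type*} [AddCommMonoid M] (S : Finset α) (f : ℕ → M) :
    ∑ k ∈ S, f #{k' ∈ S | k < k'} = ∑ j ∈ range #S, f j := by
  rw [← image_card_filter_lt, sum_image (strictAntiOn_card_filter_lt S).injOn]

theorem sum_choose_card_filter_lt (S : Finset α) (t : ℕ) :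
    ∑ k ∈ S, (#{k' ∈ S | k < k'}).choose t = (#S).choose (t + 1) := by
  rw [sum_card_filter_lt S (·.choose t), sum_range_choose_eq_choose_add_one]

theorem card_filter_lt_sdiff {S T : Finset α} (hTS : T ⊆ S) (k : α) :
    #{k' ∈ S \ T | k < k'} = #{k' ∈ S | k < k'} - #{k' ∈ T | k < k'} := by
  have : {k' ∈ S \ T | k < k'} = {k' ∈ S | k < k'} \ {k' ∈ T | k < k'} := by grind
  rw [this, card_sdiff_of_subset (monotone_filter_left _ hTS)]

end Rank

theorem card_filter_Icc_one_lt (K k : ℕ) : #{k' ∈ Icc 1 K | k < k'} = K - k := by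
  have : {k' ∈ Icc 1 K | k < k'} = Ioc k K := by
    ext; simp only [mem_filter, mem_Icc, mem_Ioc]; omega
  rw [this, Nat.card_Ioc]

theorem stmt18_general (K t : ℕ)
    (𝒦 : Finset ℕ) (h𝒦 : 𝒦 ⊆ Finset.Icc 1 K) :
    ∑ k ∈ Finset.Icc 1 K,
        (if k ∈ 𝒦 then (Nat.choose (K - k) t : ℝ) / (Nat.choose K t : ℝ)
          else ((Nat.choose (K - k) t : ℝ)
            - (Nat.choose (K - k - (𝒦.filter (fun k' => k < k')).card) t : ℝ))
              / (Nat.choose K t : ℝ))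
      = ((Nat.choose K (t + 1) : ℝ) - (Nat.choose (K - 𝒦.card) (t + 1) : ℝ))
          / (Nat.choose K t : ℝ) := by
  have hall : ∑ k ∈ Icc 1 K, (K - k).choose t = K.choose (t + 1) := by
    simpa [card_filter_Icc_one_lt] using sum_choose_card_filter_lt (Icc 1 K) t
  have hrest : ∑ k ∈ Icc 1 K \ 𝒦, (K - k - #{k' ∈ 𝒦 | k < k'}).choose t
      = (K - #𝒦).choose (t + 1) := by
    have hcard : #(Icc 1 K \ 𝒦) = K - #𝒦 := by
      rw [card_sdiff_of_subset h𝒦, Nat.card_Icc, Nat.add_sub_cancel]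
    rw [← hcard, ← sum_choose_card_filter_lt]
    refine sum_congr rfl fun k _ => ?_
    rw [card_filter_lt_sdiff h𝒦, card_filter_Icc_one_lt]
  calc _ = ∑ k ∈ Icc 1 K, ((K - k).choose t
          - if k ∈ 𝒦 then 0 else ((K - k - #{k' ∈ 𝒦 | k < k'}).choose t : ℝ))
            / K.choose t :=
        sum_congr rfl fun k _ => by split_ifs <;> simp
    _ = ((∑ k ∈ Icc 1 K, ((K - k).choose t : ℝ))
          - ∑ k ∈ Icc 1 K \ 𝒦, ((K - k - #{k' ∈ 𝒦 | k < k'}).choose t : ℝ))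
            / K.choose t := by
        rw [← sum_div, sum_sub_distrib, sum_ite, sum_const_zero, zero_add,
          filter_notMem_eq_sdiff]
    _ = _ := by push_cast [← hall, ← hrest]; rfl

/-- Delivery rate of the single-demand subroutine: for a nonempty leader set
`𝒦 ⊆ [K]` with `e_k = |{k' ∈ 𝒦 : k' > k}|`, the per-user rates
`γ̂_k = C(K-k,t)/C(K,t)` for `k ∈ 𝒦` and
`γ̂_k = (C(K-k,t) − C(K-k-e_k,t))/C(K,t)` for `k ∉ 𝒦` sum to
`(C(K,t+1) − C(K−|𝒦|,t+1))/C(K,t)`. -/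
theorem stmt18 (K t : ℕ) (hK : 1 ≤ K) (htK : t ≤ K)
    (𝒦 : Finset ℕ) (h𝒦 : 𝒦 ⊆ Finset.Icc 1 K) (hne : 𝒦.Nonempty) :
    ∑ k ∈ Finset.Icc 1 K,
        (if k ∈ 𝒦 then (Nat.choose (K - k) t : ℝ) / (Nat.choose K t : ℝ)
          else ((Nat.choose (K - k) t : ℝ)
            - (Nat.choose (K - k - (𝒦.filter (fun k' => k < k')).card) t : ℝ))
              / (Nat.choose K t : ℝ))
      = ((Nat.choose K (t + 1) : ℝ) - (Nat.choose (K - 𝒦.card) (t + 1) : ℝ))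
          / (Nat.choose K t : ℝ) :=
  stmt18_general K t 𝒦 h𝒦
end
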